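/- arXiv:1309.3778 — 4 statements merged into one kernel-verified Lean document; each statement's English description precedes it below -/
import Mathlib

section
/- Let G be a group and let a, b, c be elements of G satisfying the braid relations aba = bab and bcb = cbc, together with ac = ca. Then (abc)^4 = (abc)^2 · b a c b · c^2. -/
theorem stmt0 {G : Type*} [Group G] (a b c : G)
    (hab : a * b * a = b * a * b) (hbc : b * c * b = c * b * c)
    (hac : a * c = c * a) :
    (a * b * c) ^ 4 = (a * b * c) ^ 2 * (b * a * c * b) * c ^ 2 := by
  have key : (a * b * c) ^ 2 = (b * a * c * b) * c ^ 2 := by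
    calc (a * b * c) ^ 2 = a * b * (c * a) * b * c := by rw [pow_two]; simp [mul_assoc]
    _ = a * b * a * c * b * c := by rw [← hac]; group
    _ = b * a * (b * c * b) * c := by rw [hab]; group
    _ = b * a * (c * b * c) * c := by rw [hbc]
    _ = (b * a * c * b) * c ^ 2 := by rw [pow_two]; simp [mul_assoc]
  calc (a * b * c) ^ 4 = (a * b * c) ^ 2 * (a * b * c) ^ 2 := by group
  _ = (a * b * c) ^ 2 * (b * a * c * b) * c ^ 2 := by rw [key]; group
end

section
/- Let G be a group and let t1, …, tn be elements of G such that ti t(i+1) ti = t(i+1) ti t(i+1) for 1 ≤ i ≤ n−1 and ti tj = tj ti whenever |i − j| > 1. Then (t1 t2 ⋯ tn)^{n+1} = (t1 t2 ⋯ t(n−1))^n · (tn t(n−1) ⋯ t2 t1) · (t1 t2 ⋯ t(n−1) tn). -/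
@[reducible] def stmt1C {G : Type*} [Group G] (t : ℕ → G) (m : ℕ) : G :=
  ((List.range m).map (fun i => t (i + 1))).prod

@[reducible] def stmt1S {G : Type*} [Group G] (t : ℕ → G) (n m : ℕ) : G :=
  ((List.range m).map (fun i => t (n - i))).prod

theorem stmt1C_succ {G : Type*} [Group G] (t : ℕ → G) (m : ℕ) :
    stmt1C t (m + 1) = stmt1C t m * t (m + 1) := by
  simp [stmt1C, List.range_succ]

theorem stmt1S_succ {G : Type*} [Group G] (t : ℕ → G) (n m : ℕ) :
    stmt1S t n (m + 1) = stmt1S t n m * t (n - m) := by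
  simp [stmt1S, List.range_succ]

theorem stmt1 {G : Type*} [Group G] (n : ℕ) (hn : 1 ≤ n) (t : ℕ → G)
    (hbraid : ∀ i, 1 ≤ i → i ≤ n - 1 → t i * t (i + 1) * t i = t (i + 1) * t i * t (i + 1))
    (hcomm : ∀ i j, 1 ≤ i → i ≤ n → 1 ≤ j → j ≤ n → (i : ℤ) - j > 1 ∨ (j : ℤ) - i > 1 →
      t i * t j = t j * t i) :
    (((List.range n).map (fun i => t (i + 1))).prod) ^ (n + 1) =
      (((List.range (n - 1)).map (fun i => t (i + 1))).prod) ^ n *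
        (((List.range n).map (fun i => t (n - i))).prod) *
        (((List.range n).map (fun i => t (i + 1))).prod) := by
  -- commutation of t j with a prefix product
  have hcommC : ∀ j m, m + 1 < j → j ≤ n → stmt1C t m * t j = t j * stmt1C t m := by
    intro j m
    induction m with
    | zero => intro _ _; simp [stmt1C]
    | succ m ih =>
      intro h1 h2
      rw [stmt1C_succ, mul_assoc,
        hcomm (m + 1) j (by omega) (by omega) (by omega) h2 (by right; push_cast; omega),
        ← mul_assoc, ih (by omega) h2, mul_assoc]
  -- shift lemma
  have hshift : ∀ k, 1 ≤ k → k ≤ n - 1 → ∀ m, k + 1 ≤ m → m ≤ n →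
      stmt1C t m * t k = t (k + 1) * stmt1C t m := by
    intro k hk1 hk2 m hm1
    induction m, hm1 using Nat.le_induction with
    | base =>
      intro hm2
      obtain ⟨k', rfl⟩ : ∃ k', k = k' + 1 := ⟨k - 1, by omega⟩
      rw [stmt1C_succ, stmt1C_succ, mul_assoc, mul_assoc,
        show t (k' + 1) * (t (k' + 1 + 1) * t (k' + 1)) =
          t (k' + 1) * t (k' + 1 + 1) * t (k' + 1) by rw [mul_assoc],
        hbraid (k' + 1) (by omega) hk2]
      rw [show stmt1C t k' * (t (k' + 1 + 1) * t (k' + 1) * t (k' + 1 + 1)) =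
        stmt1C t k' * t (k' + 1 + 1) * (t (k' + 1) * t (k' + 1 + 1)) by group]
      rw [hcommC (k' + 1 + 1) k' (by omega) (by omega)]
      group
    | succ m hm ih =>
      intro hm2
      rw [stmt1C_succ, mul_assoc,
        ← hcomm k (m + 1) (by omega) (by omega) (by omega) (by omega)
          (by right; push_cast; omega),
        ← mul_assoc, ih (by omega), mul_assoc]
  -- key rearrangement
  have hkey : ∀ j, j + 1 ≤ n →
      stmt1S t n j * stmt1C t n = stmt1C t (n - 1) * stmt1S t n (j + 1) := by
    intro j
    induction j with
    | zero =>
      intro _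
      rw [stmt1S_succ]
      simp only [stmt1S, List.range_zero, List.map_nil, List.prod_nil, one_mul, Nat.sub_zero]
      rw [show n = (n - 1) + 1 by omega, stmt1C_succ,
        show n - 1 + 1 - 1 = n - 1 by omega]
    | succ j ih =>
      intro hj
      rw [stmt1S_succ, mul_assoc]
      have h1 : t (n - j) * stmt1C t n = stmt1C t n * t (n - j - 1) := by
        have := hshift (n - j - 1) (by omega) (by omega) n (by omega) le_rfl
        rw [show n - j - 1 + 1 = n - j by omega] at this
        exact this.symm
      rw [h1, ← mul_assoc, ih (by omega), mul_assoc, stmt1S_succ t n (j + 1),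
        show n - (j + 1) = n - j - 1 by omega]
  -- iterate the key rearrangement
  have hiter : ∀ d j, j + d = n →
      stmt1S t n j * stmt1C t n ^ d = stmt1C t (n - 1) ^ d * stmt1S t n n := by
    intro d
    induction d with
    | zero =>
      intro j hj
      subst hj
      simp
    | succ d ih =>
      intro j hj
      rw [pow_succ', pow_succ', ← mul_assoc, hkey j (by omega),
        mul_assoc, ih (j + 1) (by omega), mul_assoc]
  have hmain := hiter n 0 (by omega)
  simp only [stmt1S, List.range_zero, List.map_nil, List.prod_nil, one_mul] at hmain
  show stmt1C t n ^ (n + 1) = stmt1C t (n - 1) ^ n * stmt1S t n n * stmt1C t n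
  rw [pow_succ, hmain]
end

section
/- Let G be a group, let φ ∈ G, and suppose there exist elements c, d, e ∈ G with φ d φ^{−1} = c, φ c φ^{−1} = e, cd = dc, ce = ec, and an element T = d c^{−1} e c^{−1}. Let S be a conjugation-invariant subset of G containing d, e, and all elements appearing in some fixed factorization of φ into 12 elements of S, and such that T is a product of 10 elements of S. Then for every m ≥ 1, φ is a product of 12 + 10m elements of S. -/
/-- `x` is a product of `n` elements of `S`. -/
def IsProdOf {G : Type*} [Group G] (S : Set G) (n : ℕ) (x : G) : Prop :=
  ∃ l : List G, l.length = n ∧ (∀ s ∈ l, s ∈ S) ∧ l.prod = x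

theorem IsProdOf.mul {G : Type*} [Group G] {S : Set G} {n k : ℕ} {x y : G}
    (hx : IsProdOf S n x) (hy : IsProdOf S k y) : IsProdOf S (n + k) (x * y) := by
  obtain ⟨l, hl, hls, hlp⟩ := hx
  obtain ⟨l', hl', hls', hlp'⟩ := hy
  exact ⟨l ++ l', by simp [hl, hl'], by
    intro s hs; rcases List.mem_append.mp hs with h | h
    · exact hls s h
    · exact hls' s h, by simp [hlp, hlp']⟩

theorem IsProdOf.conj {G : Type*} [Group G] {S : Set G}
    (hS : ∀ g s : G, s ∈ S → g * s * g⁻¹ ∈ S) {n : ℕ} {x : G} (g : G)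
    (hx : IsProdOf S n x) : IsProdOf S n (g * x * g⁻¹) := by
  obtain ⟨l, hl, hls, hlp⟩ := hx
  refine ⟨l.map (fun s => g * s * g⁻¹), by simp [hl], ?_, ?_⟩
  · intro s hs
    obtain ⟨a, ha, rfl⟩ := List.mem_map.mp hs
    exact hS g a (hls a ha)
  · subst hlp
    clear hl hls
    induction l with
    | nil => simp
    | cons a l ih => rw [List.map_cons, List.prod_cons, List.prod_cons, ih]; group

theorem stmt9 {G : Type*} [Group G] (S : Set G)
    (hS : ∀ g s : G, s ∈ S → g * s * g⁻¹ ∈ S)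
    (φ c d e T : G)
    (h1 : φ * d * φ⁻¹ = c) (h2 : φ * c * φ⁻¹ = e)
    (hcd : c * d = d * c) (hce : c * e = e * c)
    (hT : T = d * c⁻¹ * e * c⁻¹)
    (hd : d ∈ S) (he : e ∈ S)
    (hφ : IsProdOf S 12 φ) (hTfac : IsProdOf S 10 T) :
    ∀ m : ℕ, 1 ≤ m → IsProdOf S (12 + 10 * m) φ := by
  have hkey : (c * e⁻¹)⁻¹ * (φ * T) * (c * e⁻¹) = φ := by
    subst h1 h2 hT; group
  have main : ∀ m : ℕ, IsProdOf S (12 + 10 * m) φ := by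
    intro m
    induction m with
    | zero => simpa using hφ
    | succ m ih =>
      have h := (ih.mul hTfac).conj hS (c * e⁻¹)⁻¹
      rw [inv_inv, hkey] at h
      have : 12 + 10 * (m + 1) = 12 + 10 * m + 10 := by ring
      rwa [this]
  exact fun m _ => main m
end

section
/- Let G be a group and t1, …, t(2g-1) elements satisfying the braid relations ti t(i+1) ti = t(i+1) ti t(i+1) and ti tj = tj ti for |i − j| > 1. Then (t1 ⋯ t(2g−1))^{2g} = (t1 ⋯ t(2g−3))^{2g−2} · (t(2g−2) ⋯ t2 t1 t1 t2 ⋯ t(2g−2)) · (t(2g−1) ⋯ t2 t1 t1 t2 ⋯ t(2g−1)). -/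
/-!
Write `Δ = t₁ ⋯ tₙ₊₁` and `A = t₁ ⋯ tₙ`. The braid relations say that `Δ` conjugates `tᵢ` to
`tᵢ₊₁` for `1 ≤ i ≤ n`, i.e. `tᵢ₊₁ Δ = Δ tᵢ`. Pushing `Δ` through descending products with this
rule gives, by induction on `k ≤ n + 1`, `Δᵏ = Aᵏ · (tₙ₊₁ tₙ ⋯ tₙ₊₂₋ₖ)`; for `k = n + 1` this is
the chain relation `Δⁿ⁺¹ = Aⁿ⁺¹ · (tₙ₊₁ ⋯ t₁)`. Multiplying by `Δ` and applying it for
`n + 1 = 2g - 1` and then for `n + 1 = 2g - 2` gives the theorem.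
-/

namespace BraidChain

variable {M : Type*} [Monoid M]

structure IsBraidChain (t : ℕ → M) (n : ℕ) : Prop where
  braid : ∀ i, 1 ≤ i → i + 1 ≤ n → t i * t (i + 1) * t i = t (i + 1) * t i * t (i + 1)
  commute : ∀ i j, 1 ≤ i → i + 1 < j → j ≤ n → Commute (t i) (t j)

def ascProd (t : ℕ → M) (n : ℕ) : M := ((List.range n).map fun i => t (i + 1)).prod

def descProd (t : ℕ → M) (a k : ℕ) : M := ((List.range k).map fun i => t (a - i)).prod

variable {t : ℕ → M}

theorem IsBraidChain.mono {m n : ℕ} (h : IsBraidChain t n) (hmn : m ≤ n) : IsBraidChain t m :=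
  ⟨fun i hi hin => h.braid i hi (by omega), fun i j hi hij hj => h.commute i j hi hij (by omega)⟩

theorem ascProd_succ (t : ℕ → M) (n : ℕ) : ascProd t (n + 1) = ascProd t n * t (n + 1) :=
  List.prod_range_succ _ n

theorem descProd_succ (t : ℕ → M) (a k : ℕ) :
    descProd t a (k + 1) = t a * descProd t (a - 1) k := by
  rw [descProd, List.prod_range_succ', Nat.sub_zero]
  congr 3 with i
  rw [Nat.sub_right_comm, Nat.sub_sub]

theorem IsBraidChain.commute_ascProd {n m j : ℕ} (h : IsBraidChain t n) (hmj : m + 1 < j)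
    (hj : j ≤ n) : Commute (t j) (ascProd t m) := by
  refine Commute.list_prod_right _ _ fun x hx => ?_
  obtain ⟨i, hi, rfl⟩ := List.mem_map.1 hx
  exact (h.commute (i + 1) j (by omega) (by simp at hi; omega) hj).symm

theorem IsBraidChain.semiconjBy_ascProd {n i : ℕ} (h : IsBraidChain t (n + 1)) (hi : 1 ≤ i)
    (hin : i ≤ n) : SemiconjBy (ascProd t (n + 1)) (t i) (t (i + 1)) := by
  induction n with
  | zero => omega
  | succ n ih =>
    rw [ascProd_succ]
    obtain hlt | rfl : i < n + 1 ∨ i = n + 1 := by omega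
    · exact (ih (h.mono (by omega)) (by omega)).mul_left
        (h.commute i (n + 2) hi (by omega) le_rfl).symm
    · have hcomm : Commute (t (n + 2)) (ascProd t n) := h.commute_ascProd (by omega) le_rfl
      show ascProd t (n + 1) * t (n + 2) * t (n + 1) = t (n + 2) * (ascProd t (n + 1) * t (n + 2))
      rw [ascProd_succ]
      calc ascProd t n * t (n + 1) * t (n + 2) * t (n + 1)
          = ascProd t n * (t (n + 1) * t (n + 2) * t (n + 1)) := by simp only [mul_assoc]
        _ = ascProd t n * (t (n + 2) * t (n + 1) * t (n + 2)) := by rw [h.braid (n + 1) hi le_rfl]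
        _ = t (n + 2) * (ascProd t n * t (n + 1) * t (n + 2)) := by
          rw [← mul_assoc, ← mul_assoc, ← hcomm.eq]; simp only [mul_assoc]

theorem IsBraidChain.semiconjBy_descProd {n a k : ℕ} (h : IsBraidChain t (n + 1)) (hka : k ≤ a)
    (han : a ≤ n) : SemiconjBy (ascProd t (n + 1)) (descProd t a k) (descProd t (a + 1) k) := by
  induction k generalizing a with
  | zero => exact SemiconjBy.one_right _
  | succ k ih =>
    rw [descProd_succ, descProd_succ, Nat.add_sub_cancel]
    have hrest := ih (a := a - 1) (by omega) (by omega)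
    rw [Nat.sub_add_cancel (by omega)] at hrest
    exact (h.semiconjBy_ascProd (by omega) han).mul_right hrest

theorem IsBraidChain.ascProd_pow {n k : ℕ} (h : IsBraidChain t (n + 1)) (hk : k ≤ n + 1) :
    ascProd t (n + 1) ^ k = ascProd t n ^ k * descProd t (n + 1) k := by
  induction k with
  | zero => simp [descProd]
  | succ k ih =>
    have hshift : descProd t (n + 1) k * ascProd t (n + 1) =
        ascProd t (n + 1) * descProd t n k :=
      (h.semiconjBy_descProd (by omega) le_rfl).symm
    rw [pow_succ, ih (by omega), mul_assoc, hshift, descProd_succ, Nat.add_sub_cancel,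
      ascProd_succ, pow_succ]
    simp only [mul_assoc]

theorem IsBraidChain.ascProd_pow_add_two {n : ℕ} (h : IsBraidChain t (n + 1)) :
    ascProd t (n + 1) ^ (n + 2) =
      ascProd t n ^ (n + 1) * (descProd t (n + 1) (n + 1) * ascProd t (n + 1)) := by
  rw [pow_succ, h.ascProd_pow le_rfl, mul_assoc]

end BraidChain

open BraidChain in
theorem stmt13 {G : Type*} [Group G] (g : ℕ) (hg : 2 ≤ g) (t : ℕ → G)
    (hbraid : ∀ i, 1 ≤ i → i ≤ 2 * g - 2 →
      t i * t (i + 1) * t i = t (i + 1) * t i * t (i + 1))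
    (hcomm : ∀ i j, 1 ≤ i → i ≤ 2 * g - 1 → 1 ≤ j → j ≤ 2 * g - 1 →
      (i : ℤ) - j > 1 ∨ (j : ℤ) - i > 1 → t i * t j = t j * t i) :
    (((List.range (2 * g - 1)).map (fun i => t (i + 1))).prod) ^ (2 * g) =
      (((List.range (2 * g - 3)).map (fun i => t (i + 1))).prod) ^ (2 * g - 2) *
        ((((List.range (2 * g - 2)).map (fun i => t (2 * g - 2 - i))).prod) *
          (((List.range (2 * g - 2)).map (fun i => t (i + 1))).prod)) *
        ((((List.range (2 * g - 1)).map (fun i => t (2 * g - 1 - i))).prod) *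
          (((List.range (2 * g - 1)).map (fun i => t (i + 1))).prod)) := by
  obtain ⟨m, rfl⟩ : ∃ m, g = m + 2 := ⟨g - 2, by omega⟩
  have hchain : IsBraidChain t (2 * m + 3) :=
    ⟨fun i hi hin => hbraid i hi (by omega),
      fun i j hi hij hj => hcomm i j hi (by omega) (by omega) hj (by omega)⟩
  have hlong := hchain.ascProd_pow_add_two (n := 2 * m + 2)
  have hshort := (hchain.mono (by omega)).ascProd_pow_add_two (n := 2 * m + 1)
  change ascProd t (2 * m + 2 + 1) ^ (2 * m + 2 + 2) =
    ascProd t (2 * m + 1) ^ (2 * m + 1 + 1) *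
      (descProd t (2 * m + 1 + 1) (2 * m + 1 + 1) * ascProd t (2 * m + 1 + 1)) *
      (descProd t (2 * m + 2 + 1) (2 * m + 2 + 1) * ascProd t (2 * m + 2 + 1))
  rw [hlong, hshort]
end
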